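/- Define, for λ > 0, t ∈ [0,1), y > 0, θ ∈ [0,t]: Φ^{1,λ}(t,y) := (1/(2√2·y)) e^{λ²/2} ∫_{(y−λ)²/(2(1−t))}^{(y+λ)²/(2(1−t))} e^{−u} u^{−1/2} du, Φ^{2,λ}(t,y) := ((y−λ)/(√((1−t)³)·y)) e^{λ²/2} exp(−(y−λ)²/(2(1−t))), and Φ^λ(t,y,θ) := Φ^{1,λ}(t,y) + (1−θ)·max(0, Φ^{2,λ}(t,y)). Then there is a positive function c₁ on [0,1), bounded on every interval [0, 1−ε] with ε ∈ (0,1), such that for all λ > 0, y > 0, t ∈ [0,1) and 0 ≤ θ ≤ t: Φ^λ(t,y,θ) ≤ c₁(t) · exp(λ²/2) · exp(−(y−λ)²/(2(1−t))). (In fact c₁(t) = (1−t)^{−1/2} + (1−t)^{−3/2} works.) -/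
import Mathlib


open MeasureTheory Real

/-- `Φ^{1,λ}(t,y)`. -/
noncomputable def Phi1 (lam t y : ℝ) : ℝ :=
  1 / (2 * Real.sqrt 2 * y) * Real.exp (lam ^ 2 / 2) *
    ∫ u in (y - lam) ^ 2 / (2 * (1 - t))..(y + lam) ^ 2 / (2 * (1 - t)),
      Real.exp (-u) / Real.sqrt u

/-- `Φ^{2,λ}(t,y)`. -/
noncomputable def Phi2 (lam t y : ℝ) : ℝ :=
  (y - lam) / (Real.sqrt ((1 - t) ^ 3) * y) * Real.exp (lam ^ 2 / 2) *
    Real.exp (-(y - lam) ^ 2 / (2 * (1 - t)))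

/-- `Φ^λ(t,y,θ) = Φ^{1,λ}(t,y) + (1−θ)·max(0, Φ^{2,λ}(t,y))`. -/
noncomputable def Phi (lam t y θ : ℝ) : ℝ :=
  Phi1 lam t y + (1 - θ) * max 0 (Phi2 lam t y)

lemma integral_bound_aux {a b : ℝ} (ha : 0 ≤ a) (hab : a ≤ b) :
    ∫ u in a..b, Real.exp (-u) / Real.sqrt u ≤
      Real.exp (-a) * (2 * (Real.sqrt b - Real.sqrt a)) := by
  have hg : IntervalIntegrable (fun u : ℝ => Real.exp (-a) * u ^ (-(1/2) : ℝ)) volume a b :=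
    (intervalIntegral.intervalIntegrable_rpow' (by norm_num)).const_mul _
  have hpt : ∀ u ∈ Set.Icc a b, Real.exp (-u) / Real.sqrt u ≤ Real.exp (-a) * u ^ (-(1/2) : ℝ) := by
    intro u hu
    rcases eq_or_lt_of_le (ha.trans hu.1) with h0 | h0
    · rw [← h0]
      simp
    · rw [Real.sqrt_eq_rpow, div_eq_mul_inv, ← Real.rpow_neg h0.le]
      exact mul_le_mul_of_nonneg_right (Real.exp_le_exp.mpr (neg_le_neg hu.1))
        (Real.rpow_nonneg h0.le _)
  have hf : IntervalIntegrable (fun u : ℝ => Real.exp (-u) / Real.sqrt u) volume a b := by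
    apply hg.mono_fun
    · exact ((Real.continuous_exp.comp continuous_neg).measurable.div
        Real.continuous_sqrt.measurable).aestronglyMeasurable
    · refine (ae_restrict_iff' measurableSet_uIoc).mpr (Filter.Eventually.of_forall fun u hu => ?_)
      rw [Set.uIoc_of_le hab] at hu
      have hu' : u ∈ Set.Icc a b := ⟨hu.1.le, hu.2⟩
      have h1 : (0:ℝ) ≤ Real.exp (-u) / Real.sqrt u :=
        div_nonneg (Real.exp_pos _).le (Real.sqrt_nonneg _)
      have h2 : (0:ℝ) ≤ Real.exp (-a) * u ^ (-(1/2) : ℝ) :=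
        mul_nonneg (Real.exp_pos _).le (Real.rpow_nonneg (ha.trans hu.1.le) _)
      show ‖Real.exp (-u) / Real.sqrt u‖ ≤ ‖Real.exp (-a) * u ^ (-(1/2) : ℝ)‖
      rw [Real.norm_of_nonneg h1, Real.norm_of_nonneg h2]
      exact hpt u hu'
  calc ∫ u in a..b, Real.exp (-u) / Real.sqrt u
      ≤ ∫ u in a..b, Real.exp (-a) * u ^ (-(1/2) : ℝ) :=
        intervalIntegral.integral_mono_on hab hf hg hpt
    _ = Real.exp (-a) * (2 * (Real.sqrt b - Real.sqrt a)) := by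
        rw [intervalIntegral.integral_const_mul,
          integral_rpow (Or.inl (by norm_num))]
        rw [show (-(1/2):ℝ) + 1 = 1/2 by norm_num, ← Real.sqrt_eq_rpow, ← Real.sqrt_eq_rpow]
        ring

lemma sqrt2_mul_self : Real.sqrt 2 * Real.sqrt 2 = 2 := Real.mul_self_sqrt (by norm_num)


lemma Phi1_le (lam y t : ℝ) (hlam : 0 < lam) (hy : 0 < y) (ht1 : t < 1)
    (hint : ∫ u in (y - lam) ^ 2 / (2 * (1 - t))..(y + lam) ^ 2 / (2 * (1 - t)),
        Real.exp (-u) / Real.sqrt u ≤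
      Real.exp (-((y - lam) ^ 2 / (2 * (1 - t)))) *
        (2 * (Real.sqrt ((y + lam) ^ 2 / (2 * (1 - t))) -
              Real.sqrt ((y - lam) ^ 2 / (2 * (1 - t))))) ) :
    Phi1 lam t y ≤ (Real.sqrt (1 - t))⁻¹ * Real.exp (lam ^ 2 / 2) *
      Real.exp (-((y - lam) ^ 2 / (2 * (1 - t)))) := by
  have hs : 0 < 1 - t := by linarith
  set s := 1 - t with hsdef
  have hsq2 : (0:ℝ) < Real.sqrt 2 := Real.sqrt_pos.mpr (by norm_num)
  have hsqs : (0:ℝ) < Real.sqrt s := Real.sqrt_pos.mpr hs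
  have h2s : Real.sqrt (2 * s) = Real.sqrt 2 * Real.sqrt s := Real.sqrt_mul (by norm_num) s
  have hsa : Real.sqrt ((y - lam) ^ 2 / (2 * s)) = |y - lam| / (Real.sqrt 2 * Real.sqrt s) := by
    rw [Real.sqrt_div (sq_nonneg _), Real.sqrt_sq_eq_abs, h2s]
  have hsb : Real.sqrt ((y + lam) ^ 2 / (2 * s)) = (y + lam) / (Real.sqrt 2 * Real.sqrt s) := by
    rw [Real.sqrt_div (sq_nonneg _), Real.sqrt_sq (by linarith), h2s]
  have hdiff : Real.sqrt ((y + lam) ^ 2 / (2 * s)) - Real.sqrt ((y - lam) ^ 2 / (2 * s)) ≤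
      2 * y / (Real.sqrt 2 * Real.sqrt s) := by
    rw [hsa, hsb, div_sub_div_same, div_le_div_iff₀ (by positivity) (by positivity)]
    have : lam - y ≤ |y - lam| := by
      rw [abs_sub_comm]; exact le_abs_self _
    nlinarith [mul_pos hsq2 hsqs]
  have hE : (0:ℝ) < Real.exp (lam ^ 2 / 2) := Real.exp_pos _
  unfold Phi1
  rw [← hsdef]
  calc 1 / (2 * Real.sqrt 2 * y) * Real.exp (lam ^ 2 / 2) *
        ∫ u in (y - lam) ^ 2 / (2 * s)..(y + lam) ^ 2 / (2 * s), Real.exp (-u) / Real.sqrt u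
      ≤ 1 / (2 * Real.sqrt 2 * y) * Real.exp (lam ^ 2 / 2) *
        (Real.exp (-((y - lam) ^ 2 / (2 * s))) *
          (2 * (Real.sqrt ((y + lam) ^ 2 / (2 * s)) - Real.sqrt ((y - lam) ^ 2 / (2 * s))))) :=
        mul_le_mul_of_nonneg_left hint (by positivity)
    _ ≤ 1 / (2 * Real.sqrt 2 * y) * Real.exp (lam ^ 2 / 2) *
        (Real.exp (-((y - lam) ^ 2 / (2 * s))) * (2 * (2 * y / (Real.sqrt 2 * Real.sqrt s)))) := by
        have h0 : (0:ℝ) ≤ 1 / (2 * Real.sqrt 2 * y) * Real.exp (lam ^ 2 / 2) := by positivity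
        have h1 : (0:ℝ) ≤ Real.exp (-((y - lam) ^ 2 / (2 * s))) := (Real.exp_pos _).le
        apply mul_le_mul_of_nonneg_left _ h0
        apply mul_le_mul_of_nonneg_left _ h1
        linarith
    _ = (Real.sqrt s)⁻¹ * Real.exp (lam ^ 2 / 2) * Real.exp (-((y - lam) ^ 2 / (2 * s))) := by
        have h22 : Real.sqrt 2 * Real.sqrt 2 = 2 := sqrt2_mul_self
        field_simp
        ring_nf
        rw [Real.sq_sqrt (by norm_num : (0:ℝ) ≤ 2)]

lemma Phi2_part_le (lam y t θ : ℝ) (hlam : 0 < lam) (hy : 0 < y) (ht1 : t < 1)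
    (hθ0 : 0 ≤ θ) :
    (1 - θ) * max 0 (Phi2 lam t y) ≤
      (Real.sqrt ((1 - t) ^ 3))⁻¹ * Real.exp (lam ^ 2 / 2) *
        Real.exp (-((y - lam) ^ 2 / (2 * (1 - t)))) := by
  have hs : 0 < 1 - t := by linarith
  have hs3 : 0 < Real.sqrt ((1 - t) ^ 3) := Real.sqrt_pos.mpr (by positivity)
  have hR : (0:ℝ) ≤ (Real.sqrt ((1 - t) ^ 3))⁻¹ * Real.exp (lam ^ 2 / 2) *
      Real.exp (-((y - lam) ^ 2 / (2 * (1 - t)))) := by positivity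
  have hmax : max 0 (Phi2 lam t y) ≤ (Real.sqrt ((1 - t) ^ 3))⁻¹ * Real.exp (lam ^ 2 / 2) *
      Real.exp (-((y - lam) ^ 2 / (2 * (1 - t)))) := by
    apply max_le hR
    unfold Phi2
    rw [neg_div]
    have hfrac : (y - lam) / (Real.sqrt ((1 - t) ^ 3) * y) ≤ (Real.sqrt ((1 - t) ^ 3))⁻¹ := by
      rw [div_le_iff₀ (by positivity)]
      have h : (Real.sqrt ((1 - t) ^ 3))⁻¹ * (Real.sqrt ((1 - t) ^ 3) * y) = y := by
        field_simp
      rw [h]; linarith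
    exact mul_le_mul_of_nonneg_right
      (mul_le_mul_of_nonneg_right hfrac (Real.exp_pos _).le) (Real.exp_pos _).le
  calc (1 - θ) * max 0 (Phi2 lam t y) ≤ 1 * max 0 (Phi2 lam t y) :=
        mul_le_mul_of_nonneg_right (by linarith) (le_max_left _ _)
    _ = max 0 (Phi2 lam t y) := one_mul _
    _ ≤ _ := hmax


/-- Gaussian upper bound for the Radon–Nikodym density `Φ^λ`:
there is a positive function `c₁`, bounded on each `[0, 1−ε]`, with
`Φ^λ(t,y,θ) ≤ c₁(t) e^{λ²/2} e^{−(y−λ)²/(2(1−t))}`. -/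
theorem Phi_gaussian_bound :
    ∃ c₁ : ℝ → ℝ,
      (∀ t ∈ Set.Ico (0 : ℝ) 1, 0 < c₁ t) ∧
      (∀ ε ∈ Set.Ioo (0 : ℝ) 1, ∃ M : ℝ, ∀ t ∈ Set.Icc (0 : ℝ) (1 - ε), c₁ t ≤ M) ∧
      ∀ lam : ℝ, 0 < lam → ∀ y : ℝ, 0 < y → ∀ t ∈ Set.Ico (0 : ℝ) 1,
        ∀ θ ∈ Set.Icc (0 : ℝ) t,
          Phi lam t y θ ≤
            c₁ t * Real.exp (lam ^ 2 / 2) * Real.exp (-(y - lam) ^ 2 / (2 * (1 - t))) := by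

  refine ⟨fun t => (Real.sqrt (1 - t))⁻¹ + (Real.sqrt ((1 - t) ^ 3))⁻¹, ?_, ?_, ?_⟩
  · intro t ht
    have hs : 0 < 1 - t := by linarith [ht.2]
    positivity
  · intro ε hε
    refine ⟨(Real.sqrt ε)⁻¹ + (Real.sqrt (ε ^ 3))⁻¹, fun t ht => ?_⟩
    have h1 : ε ≤ 1 - t := by linarith [ht.2]
    have hε0 : 0 < ε := hε.1
    have hb1 : (Real.sqrt (1 - t))⁻¹ ≤ (Real.sqrt ε)⁻¹ :=
      inv_anti₀ (Real.sqrt_pos.mpr hε0) (Real.sqrt_le_sqrt h1)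
    have hb2 : (Real.sqrt ((1 - t) ^ 3))⁻¹ ≤ (Real.sqrt (ε ^ 3))⁻¹ :=
      inv_anti₀ (Real.sqrt_pos.mpr (by positivity))
        (Real.sqrt_le_sqrt (pow_le_pow_left₀ hε0.le h1 3))
    exact add_le_add hb1 hb2
  · intro lam hlam y hy t ht θ hθ
    have hs : 0 < 1 - t := by linarith [ht.2]
    have hab : (y - lam) ^ 2 / (2 * (1 - t)) ≤ (y + lam) ^ 2 / (2 * (1 - t)) :=
      div_le_div_of_nonneg_right (by nlinarith) (by linarith)
    have ha : (0:ℝ) ≤ (y - lam) ^ 2 / (2 * (1 - t)) := by positivity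
    have hint := integral_bound_aux ha hab
    have h1 := Phi1_le lam y t hlam hy ht.2 hint
    have h2 := Phi2_part_le lam y t θ hlam hy ht.2 hθ.1
    have hsum := add_le_add h1 h2
    rw [neg_div]
    unfold Phi
    calc Phi1 lam t y + (1 - θ) * max 0 (Phi2 lam t y)
        ≤ (Real.sqrt (1 - t))⁻¹ * Real.exp (lam ^ 2 / 2) *
            Real.exp (-((y - lam) ^ 2 / (2 * (1 - t)))) +
          (Real.sqrt ((1 - t) ^ 3))⁻¹ * Real.exp (lam ^ 2 / 2) *
            Real.exp (-((y - lam) ^ 2 / (2 * (1 - t)))) := hsum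
      _ = ((Real.sqrt (1 - t))⁻¹ + (Real.sqrt ((1 - t) ^ 3))⁻¹) * Real.exp (lam ^ 2 / 2) *
            Real.exp (-((y - lam) ^ 2 / (2 * (1 - t)))) := by ring
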